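/- Let r : ℕ → ℕ be any function with r(n) ≤ n for all n. Then the ratio of the Kirchhoff index of G_n^{r(n)} to its Wiener index tends to 1/6 as n → ∞; that is, the sequence ((n³ + 4n² + (2·r(n) − 1)·n)/12) / (W(G_n) + r(n)), where the numerator is the Kirchhoff index of any graph obtained from G_n by deleting r(n) vertical edges and the denominator is its Wiener index, converges to 1/6 as n → ∞. -/

import Mathlib

/-- The Wiener index of a graph: half the sum of the graph distances `d(u,v)` over all ordered
pairs `(u,v)` of vertices (a finite sum for a finite graph, expressed with `finsum` so that it is
defined for every `n`). -/
noncomputable def wienerIndex {V : Type*} (G : SimpleGraph V) : ℕ :=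
  (∑ᶠ u : V, ∑ᶠ v : V, G.dist u v) / 2

/-- The graph `G_n = P₂ ⊠ C_n`: vertex set `(ZMod n) × Fin 2`, where two distinct vertices
`(i,a)` and `(j,b)` are adjacent iff `i = j` or `i = j + 1` or `j = i + 1` in `ZMod n`. -/
def Gn (n : ℕ) : SimpleGraph (ZMod n × Fin 2) where
  Adj x y := x ≠ y ∧ (x.1 = y.1 ∨ x.1 = y.1 + 1 ∨ y.1 = x.1 + 1)
  symm := by
    constructor
    rintro x y ⟨hne, h | h | h⟩
    · exact ⟨hne.symm, Or.inl h.symm⟩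
    · exact ⟨hne.symm, Or.inr (Or.inr h)⟩
    · exact ⟨hne.symm, Or.inr (Or.inl h)⟩
  loopless := by constructor; rintro x ⟨hne, -⟩; exact hne rfl

instance (n : ℕ) : DecidableRel (Gn n).Adj :=
  fun _ _ => inferInstanceAs (Decidable (_ ∧ _))

/-!
In `G_n` the distance between `(i, a)` and `(j, b)` is the cyclic distance `|j - i|` in `ZMod n`
(the absolute value of `ZMod.valMinAbs`) when `i ≠ j`, and `[a ≠ b]` when `i = j`: an edge moves
the first coordinate by at most one, and walking forwards or backwards along the cycle realises
that bound. Summing, `W(G_n) = n (2 S + 1)` with `S = ∑_{z ∈ ℤ/n} |z| = ⌊n² / 4⌋`, so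
`W(G_n) = n³ / 2 + O(n)`. After dividing by `n³`, the numerator of the ratio is `1/12 + o(1)` and
the denominator `1/2 + o(1)`, uniformly in `r(n) ≤ n`.
-/

open Filter Topology

namespace ZMod

variable {n : ℕ} [NeZero n]

lemma natAbs_valMinAbs_intCast_le (z : ℤ) : (z : ZMod n).valMinAbs.natAbs ≤ z.natAbs :=
  natAbs_min_of_le_div_two n _ _ (by rw [coe_valMinAbs]) (natAbs_valMinAbs_le _)

lemma sum_natAbs_valMinAbs_eq_sum_range :
    ∑ z : ZMod n, z.valMinAbs.natAbs = ∑ k ∈ Finset.range n, min k (n - k) := by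
  obtain ⟨m, rfl⟩ : ∃ m, n = m + 1 := Nat.exists_eq_succ_of_ne_zero (NeZero.ne n)
  simp only [valMinAbs_natAbs_eq_min]
  exact Fin.sum_univ_eq_sum_range (fun k => min k (m + 1 - k)) (m + 1)

end ZMod

lemma four_mul_sum_range_min_add_mod_two (n : ℕ) :
    4 * ∑ k ∈ Finset.range n, min k (n - k) + n % 2 = n ^ 2 := by
  induction n using Nat.twoStepInduction with
  | zero => simp
  | one => simp
  | more n ih _ =>
    have hshift : ∀ k ∈ Finset.range (n + 1),
        min (k + 1) (n + 2 - (k + 1)) = min k (n - k) + 1 := by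
      intro k hk
      simp only [Finset.mem_range] at hk
      omega
    rw [Finset.sum_range_succ', Finset.sum_congr rfl hshift, Finset.sum_add_distrib,
      Finset.sum_range_succ]
    simp only [Finset.sum_const, Finset.card_range, smul_eq_mul, mul_one, Nat.sub_self,
      Nat.min_zero]
    have : (n + 2) ^ 2 = n ^ 2 + 4 * n + 4 := by ring
    omega

namespace Gn

variable {n : ℕ}

lemma adj_add_one [Nontrivial (ZMod n)] (i : ZMod n) (a b : Fin 2) :
    (Gn n).Adj (i, a) (i + 1, b) :=
  ⟨fun h => one_ne_zero (left_eq_add.mp (congrArg Prod.fst h)), Or.inr (Or.inr rfl)⟩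

lemma natAbs_valMinAbs_sub_le_one_of_adj [NeZero n] {u v : ZMod n × Fin 2} (h : (Gn n).Adj u v) :
    (v.1 - u.1).valMinAbs.natAbs ≤ 1 := by
  obtain ⟨z, hz, hvu⟩ : ∃ z : ℤ, z.natAbs ≤ 1 ∧ v.1 - u.1 = z := by
    rcases h.2 with h | h | h
    · exact ⟨0, by simp, by simp [h]⟩
    · exact ⟨-1, by simp, by simp [h]⟩
    · exact ⟨1, by simp, by simp [h]⟩
  rw [hvu]
  exact (ZMod.natAbs_valMinAbs_intCast_le z).trans hz

lemma natAbs_valMinAbs_sub_le_length [NeZero n] {u v : ZMod n × Fin 2} (p : (Gn n).Walk u v) :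
    (v.1 - u.1).valMinAbs.natAbs ≤ p.length := by
  induction p with
  | nil => simp
  | @cons u x v h p ih =>
    have hstep := natAbs_valMinAbs_sub_le_one_of_adj h
    calc (v.1 - u.1).valMinAbs.natAbs
        ≤ ((v.1 - x.1).valMinAbs + (x.1 - u.1).valMinAbs).natAbs := by
          rw [← sub_add_sub_cancel v.1 x.1 u.1]; exact ZMod.natAbs_valMinAbs_add_le _ _
      _ ≤ (v.1 - x.1).valMinAbs.natAbs + (x.1 - u.1).valMinAbs.natAbs := Int.natAbs_add_le _ _
      _ ≤ (p.cons h).length := by rw [SimpleGraph.Walk.length_cons]; omega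

lemma exists_walk_add_natCast [Nontrivial (ZMod n)] (i : ZMod n) (a b : Fin 2) (k : ℕ) :
    ∃ p : (Gn n).Walk (i, a) (i + (k + 1 : ℕ), b), p.length = k + 1 := by
  induction k generalizing i with
  | zero =>
    refine ⟨(SimpleGraph.Walk.cons (adj_add_one i a b) .nil).copy rfl (by simp), ?_⟩
    simp
  | succ k ih =>
    obtain ⟨p, hp⟩ := ih (i + 1)
    refine ⟨(p.cons (adj_add_one i a a)).copy rfl (by push_cast; ring_nf), ?_⟩
    simp [hp]

lemma exists_walk_length_eq [NeZero n] [Nontrivial (ZMod n)] {i j : ZMod n} (hij : i ≠ j)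
    (a b : Fin 2) :
    ∃ p : (Gn n).Walk (i, a) (j, b), p.length = (j - i).valMinAbs.natAbs := by
  obtain ⟨k, hk⟩ := Nat.exists_eq_succ_of_ne_zero
    (Int.natAbs_ne_zero.mpr ((ZMod.valMinAbs_eq_zero _).not.mpr (sub_ne_zero.mpr hij.symm)))
  have hcast := ZMod.natCast_natAbs_valMinAbs (j - i)
  rw [hk] at hcast ⊢
  split_ifs at hcast
  · obtain ⟨p, hp⟩ := exists_walk_add_natCast i a b k
    exact ⟨p.copy rfl (by rw [hcast, add_sub_cancel]), by simpa using hp⟩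
  · obtain ⟨p, hp⟩ := exists_walk_add_natCast j b a k
    exact ⟨(p.copy rfl (by rw [hcast, neg_sub, add_sub_cancel])).reverse, by simpa using hp⟩

lemma dist_eq [NeZero n] [Nontrivial (ZMod n)] (i j : ZMod n) (a b : Fin 2) :
    (Gn n).dist (i, a) (j, b) =
      if i = j then (if a = b then 0 else 1) else (j - i).valMinAbs.natAbs := by
  split_ifs with hij hab
  · simp [hij, hab]
  · subst hij
    exact SimpleGraph.dist_eq_one_iff_adj.mpr ⟨fun h => hab (congrArg Prod.snd h), Or.inl rfl⟩
  · obtain ⟨p, hp⟩ := exists_walk_length_eq hij a b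
    obtain ⟨q, hq⟩ := SimpleGraph.Reachable.exists_walk_length_eq_dist ⟨p⟩
    exact le_antisymm (hp ▸ SimpleGraph.dist_le p) (hq ▸ natAbs_valMinAbs_sub_le_length q)

section

variable [NeZero n] [Nontrivial (ZMod n)]

lemma sum_dist_fiber (i j : ZMod n) :
    ∑ a : Fin 2, ∑ b : Fin 2, (Gn n).dist (i, a) (j, b) =
      4 * (j - i).valMinAbs.natAbs + if i = j then 2 else 0 := by
  by_cases hij : i = j <;> simp [dist_eq, hij, Fin.sum_univ_two]; ring

lemma wienerIndex_eq : wienerIndex (Gn n) = n * (2 * ∑ z : ZMod n, z.valMinAbs.natAbs + 1) := by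
  have hrow (i : ZMod n) : ∑ j : ZMod n, (j - i).valMinAbs.natAbs =
      ∑ z : ZMod n, z.valMinAbs.natAbs :=
    Fintype.sum_equiv (Equiv.subRight i) _ _ fun _ => rfl
  have hsum : ∑ u : ZMod n × Fin 2, ∑ v : ZMod n × Fin 2, (Gn n).dist u v =
      ∑ i : ZMod n, ∑ j : ZMod n, ∑ a : Fin 2, ∑ b : Fin 2, (Gn n).dist (i, a) (j, b) := by
    simp only [Fintype.sum_prod_type]
    exact Finset.sum_congr rfl fun i _ => Finset.sum_comm
  simp only [wienerIndex, finsum_eq_sum_of_fintype]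
  rw [hsum]
  simp only [sum_dist_fiber, Finset.sum_add_distrib, ← Finset.mul_sum, hrow, Finset.sum_ite_eq,
    Finset.mem_univ, if_true, Finset.sum_const, Finset.card_univ, ZMod.card, smul_eq_mul]
  exact Nat.div_eq_of_eq_mul_left two_pos (by ring)

lemma two_mul_wienerIndex_add : 2 * wienerIndex (Gn n) + n * (n % 2) = n ^ 3 + 2 * n := by
  have h := four_mul_sum_range_min_add_mod_two n
  rw [← ZMod.sum_natAbs_valMinAbs_eq_sum_range] at h
  rw [wienerIndex_eq]
  nlinarith

end

lemma wienerIndex_bounds (hn : 2 ≤ n) :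
    n ^ 3 + n ≤ 2 * wienerIndex (Gn n) ∧ 2 * wienerIndex (Gn n) ≤ n ^ 3 + 2 * n := by
  have : NeZero n := ⟨by omega⟩
  have : Fact (1 < n) := ⟨hn⟩
  have h := two_mul_wienerIndex_add (n := n)
  have hmod : n * (n % 2) ≤ n * 1 := Nat.mul_le_mul_left n (by omega)
  omega

end Gn

lemma tendsto_wienerIndex_Gn_div_cube :
    Tendsto (fun n : ℕ => (wienerIndex (Gn n) : ℝ) / n ^ 3) atTop (𝓝 (1 / 2)) := by
  have hinv : Tendsto (fun n : ℕ => ((n : ℝ) ^ 2)⁻¹) atTop (𝓝 0) := by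
    simpa using (tendsto_one_div_atTop_nhds_zero_nat (𝕜 := ℝ)).pow 2
  have hlo : Tendsto (fun n : ℕ => 1 / 2 + ((n : ℝ) ^ 2)⁻¹ / 2) atTop (𝓝 (1 / 2)) := by
    simpa using (hinv.div_const 2).const_add (1 / 2 : ℝ)
  have hhi : Tendsto (fun n : ℕ => 1 / 2 + ((n : ℝ) ^ 2)⁻¹) atTop (𝓝 (1 / 2)) := by
    simpa using hinv.const_add (1 / 2 : ℝ)
  refine tendsto_of_tendsto_of_tendsto_of_le_of_le' hlo hhi ?_ ?_ <;>
    filter_upwards [eventually_ge_atTop 2] with n hn <;>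
    obtain ⟨hlow, hup⟩ := Gn.wienerIndex_bounds hn <;>
    rify at hlow hup <;>
    have : (n : ℝ) ≠ 0 := by positivity
  · rw [le_div_iff₀ (by positivity)]
    field_simp
    linarith
  · rw [div_le_iff₀ (by positivity)]
    field_simp
    linarith

lemma tendsto_natCast_div_sq_of_le {r : ℕ → ℕ} (hr : ∀ n, r n ≤ n) :
    Tendsto (fun n : ℕ => (r n : ℝ) / n ^ 2) atTop (𝓝 0) := by
  refine squeeze_zero (fun n => by positivity) (fun n => ?_)
    (tendsto_one_div_atTop_nhds_zero_nat (𝕜 := ℝ))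
  rcases Nat.eq_zero_or_pos n with rfl | hn
  · simp
  · rw [div_le_div_iff₀ (by positivity) (by positivity)]
    have : (r n : ℝ) ≤ n := by exact_mod_cast hr n
    nlinarith

/-- Let `r : ℕ → ℕ` be any function with `r n ≤ n` for all `n`. Then the
ratio of the Kirchhoff index `(n³ + 4n² + (2·r(n) − 1)·n)/12` of any graph obtained from
`G_n = P₂ ⊠ C_n` by deleting `r n` vertical edges to its Wiener index `W(G_n) + r n`
converges to `1/6` as `n → ∞`. -/
theorem kirchhoff_div_wiener_del_tendsto (r : ℕ → ℕ) (hr : ∀ n, r n ≤ n) :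
    Filter.Tendsto
      (fun n : ℕ =>
        (((n : ℝ) ^ 3 + 4 * n ^ 2 + (2 * (r n : ℝ) - 1) * n) / 12) /
          ((wienerIndex (Gn n) : ℝ) + (r n : ℝ)))
      Filter.atTop (nhds (1 / 6)) := by
  have hx := tendsto_one_div_atTop_nhds_zero_nat (𝕜 := ℝ)
  have hy := tendsto_natCast_div_sq_of_le hr
  have hw := tendsto_wienerIndex_Gn_div_cube
  have hlim : Tendsto (fun n : ℕ =>
      ((1 + 4 * (1 / (n : ℝ)) + 2 * ((r n : ℝ) / n ^ 2) - (1 / (n : ℝ)) ^ 2) / 12) /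
        ((wienerIndex (Gn n) : ℝ) / n ^ 3 + (r n : ℝ) / n ^ 2 * (1 / (n : ℝ))))
      atTop (𝓝 (1 / 6)) := by
    have hnum := (((hx.const_mul 4).const_add 1).add (hy.const_mul 2)).sub (hx.pow 2)
    have := (hnum.div_const 12).div (hw.add (hy.mul hx)) (by norm_num)
    convert this using 2 <;> norm_num
  refine hlim.congr' ?_
  filter_upwards [eventually_ge_atTop 1] with n hn
  have : (n : ℝ) ≠ 0 := by positivity
  field_simp
  ring
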